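/- Under the interpolant hypothesis ‖f − I_h f‖_{V^s}² ≤ c₀ h² ‖f‖_{V^{s+α}}² and the condition μ c₀ h² ≤ ν, the V^s-level nudging estimate holds for any s ≥ 0: −μ⟨I_h(w), A^s w⟩ ≤ (ν/2)‖w‖_{V^{s+α}}² − (μ/2)‖w‖_{V^s}², provided I_h commutes with A^{s/2} (i.e., A^{s/2} I_h(w) = I_h(A^{s/2} w)). -/

import Mathlib

open RealInnerProductSpace

/-- The polarization identity `2⟪b, a⟫ = ‖a‖² + ‖b‖² - ‖a - b‖²`, with `‖b‖²` dropped. -/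
theorem neg_real_inner_le_half_norm_sub_sq_sub {H : Type*} [NormedAddCommGroup H]
    [InnerProductSpace ℝ H] (a b : H) : -⟪b, a⟫ ≤ (‖a - b‖ ^ 2 - ‖a‖ ^ 2) / 2 := by
  rw [norm_sub_sq_real, real_inner_comm]
  nlinarith [sq_nonneg ‖b‖]

theorem nudging_estimate_Vs_general {H : Type*} [NormedAddCommGroup H] [InnerProductSpace ℝ H]
    (Ash Aah Ih : H →ₗ[ℝ] H) (μ ν c₀ h : ℝ)
    (hμ : 0 < μ)
    (hsym : ∀ x y : H, ⟪Ash x, y⟫ = ⟪x, Ash y⟫)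
    (hinterp : ∀ f : H, ‖Ash (f - Ih f)‖^2 ≤ c₀ * h^2 * ‖Aah (Ash f)‖^2)
    (hcond : μ * c₀ * h^2 ≤ ν) (w : H) :
    -(μ * ⟪Ih w, Ash (Ash w)⟫) ≤ (ν/2) * ‖Aah (Ash w)‖^2 - (μ/2) * ‖Ash w‖^2 := by
  have hcoef : μ * (c₀ * h ^ 2 * ‖Aah (Ash w)‖ ^ 2) ≤ ν * ‖Aah (Ash w)‖ ^ 2 := by
    rw [← mul_assoc, ← mul_assoc]
    exact mul_le_mul_of_nonneg_right hcond (sq_nonneg _)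
  calc -(μ * ⟪Ih w, Ash (Ash w)⟫) = μ * -⟪Ash (Ih w), Ash w⟫ := by rw [hsym]; ring
    _ ≤ μ * ((‖Ash (w - Ih w)‖ ^ 2 - ‖Ash w‖ ^ 2) / 2) := by
      rw [map_sub]
      exact mul_le_mul_of_nonneg_left (neg_real_inner_le_half_norm_sub_sq_sub _ _) hμ.le
    _ ≤ μ * ((c₀ * h ^ 2 * ‖Aah (Ash w)‖ ^ 2 - ‖Ash w‖ ^ 2) / 2) := by
      gcongr
      exact hinterp w
    _ ≤ (ν/2) * ‖Aah (Ash w)‖^2 - (μ/2) * ‖Ash w‖^2 := by linarith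

/-- `V^s`-level nudging estimate: with `Ash = A^{s/2}` symmetric, `Aah = A^{α/2}`,
a linear interpolant `Ih` commuting with `A^{s/2}` and satisfying
`‖f - I_h f‖_{V^s}² ≤ c₀ h² ‖f‖_{V^{s+α}}²`, and `μ c₀ h² ≤ ν`, one has
`-μ⟨I_h w, A^s w⟩ ≤ (ν/2)‖w‖_{V^{s+α}}² - (μ/2)‖w‖_{V^s}²`. -/
theorem nudging_estimate_Vs {H : Type*} [NormedAddCommGroup H] [InnerProductSpace ℝ H]
    (Ash Aah Ih : H →ₗ[ℝ] H) (μ ν c₀ h : ℝ)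
    (hμ : 0 < μ) (hν : 0 < ν) (hc : 0 < c₀) (hh : 0 < h)
    (hsym : ∀ x y : H, ⟪Ash x, y⟫ = ⟪x, Ash y⟫)
    (hcomm : ∀ x : H, Ash (Ih x) = Ih (Ash x))
    (hinterp : ∀ f : H, ‖Ash (f - Ih f)‖^2 ≤ c₀ * h^2 * ‖Aah (Ash f)‖^2)
    (hcond : μ * c₀ * h^2 ≤ ν) (w : H) :
    -(μ * ⟪Ih w, Ash (Ash w)⟫) ≤ (ν/2) * ‖Aah (Ash w)‖^2 - (μ/2) * ‖Ash w‖^2 :=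
  nudging_estimate_Vs_general Ash Aah Ih μ ν c₀ h hμ hsym hinterp hcond w
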